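/- Let g : ℝ₊ → ℝ₊ be an unbounded, continuous, strictly increasing function with g(0) = 0, let k ∈ {0,1,…,p}, η > 0, y ∈ ℝⁿ and X ∈ ℝ^{n×p}. Consider the penalized problem (P_λ): min over β of ½‖y − Xβ‖₂² + λ π_k^g(β) + η‖β‖₁, and the constrained problem (Q): min over β with ‖β‖₀ ≤ k of ½‖y − Xβ‖₂² + η‖β‖₁. Then for every ε > 0 there exists λ̲ = λ̲(ε) > 0 such that for all λ > λ̲: (1) for every optimal solution β* of (P_λ) there exists β̂ with ‖β* − β̂‖₂ ≤ ε, ‖β̂‖₀ ≤ k, and β̂ is ε-optimal for (Q); and (2) every optimal solution of (Q) is ε-optimal for (P_λ). -/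
import Mathlib


open Finset

/-- `‖β‖₀`: the number of nonzero entries of `β`. -/
noncomputable def l0 {p : ℕ} (β : Fin p → ℝ) : ℕ :=
  (Finset.univ.filter (fun i => β i ≠ 0)).card

/-- `‖β‖₁`: the ℓ₁ norm. -/
noncomputable def l1 {p : ℕ} (β : Fin p → ℝ) : ℝ := ∑ i, |β i|

/-- The Euclidean norm of a vector. -/
noncomputable def norm2 {m : ℕ} (v : Fin m → ℝ) : ℝ := Real.sqrt (∑ i, v i ^ 2)

/-- The `k`-th projected penalty
`π_k^g(β) = min_{‖φ‖₀ ≤ k} ∑_i g(|φ_i - β_i|)`. -/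
noncomputable def projPen {p : ℕ} (g : ℝ → ℝ) (k : ℕ) (β : Fin p → ℝ) : ℝ :=
  sInf {s : ℝ | ∃ φ : Fin p → ℝ, l0 φ ≤ k ∧ s = ∑ i, g |φ i - β i|}

/-- The penalized objective `(P_λ): β ↦ ½‖y - Xβ‖₂² + λ π_k^g(β) + η‖β‖₁`. -/
noncomputable def Pobj {n p : ℕ} (y : Fin n → ℝ) (X : Matrix (Fin n) (Fin p) ℝ)
    (g : ℝ → ℝ) (k : ℕ) (η lam : ℝ) (β : Fin p → ℝ) : ℝ :=
  (1 / 2) * (∑ i, (y i - X.mulVec β i) ^ 2) + lam * projPen g k β + η * l1 β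

/-- The constrained objective `(Q): β ↦ ½‖y - Xβ‖₂² + η‖β‖₁` (over `‖β‖₀ ≤ k`). -/
noncomputable def Qobj {n p : ℕ} (y : Fin n → ℝ) (X : Matrix (Fin n) (Fin p) ℝ)
    (η : ℝ) (β : Fin p → ℝ) : ℝ :=
  (1 / 2) * (∑ i, (y i - X.mulVec β i) ^ 2) + η * l1 β

lemma projPen_nonneg {p : ℕ} (g : ℝ → ℝ) (hnonneg : ∀ x, 0 ≤ x → 0 ≤ g x)
    (k : ℕ) (β : Fin p → ℝ) : 0 ≤ projPen g k β := by
  apply le_csInf ⟨∑ i, g |(0 : Fin p → ℝ) i - β i|, Set.mem_setOf.mpr ⟨0, by simp [l0], rfl⟩⟩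
  rintro s ⟨φ, -, rfl⟩
  exact Finset.sum_nonneg fun i _ => hnonneg _ (abs_nonneg _)

lemma projPen_eq_zero {p : ℕ} (g : ℝ → ℝ) (hg0 : g 0 = 0)
    (hnonneg : ∀ x, 0 ≤ x → 0 ≤ g x) (k : ℕ) (β : Fin p → ℝ) (h : l0 β ≤ k) :
    projPen g k β = 0 := by
  refine le_antisymm (csInf_le ⟨0, ?_⟩ ⟨β, h, by simp [hg0]⟩)
    (projPen_nonneg g hnonneg k β)
  rintro s ⟨φ, -, rfl⟩
  exact Finset.sum_nonneg fun i _ => hnonneg _ (abs_nonneg _)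

lemma le_projPen {p : ℕ} (g : ℝ → ℝ) (hnonneg : ∀ x, 0 ≤ x → 0 ≤ g x)
    (hmono : StrictMonoOn g (Set.Ici (0 : ℝ))) (k : ℕ) (β : Fin p → ℝ)
    (t : ℝ) (ht : 0 ≤ t)
    (hcard : k < (Finset.univ.filter (fun i => t < |β i|)).card) :
    g t ≤ projPen g k β := by
  apply le_csInf ⟨∑ i, g |(0 : Fin p → ℝ) i - β i|, Set.mem_setOf.mpr ⟨0, by simp [l0], rfl⟩⟩
  rintro s ⟨φ, hφ, rfl⟩
  have hsub : ¬ ((Finset.univ.filter (fun i => t < |β i|)) ⊆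
      (Finset.univ.filter (fun i => φ i ≠ 0))) := by
    intro hsub
    have := Finset.card_le_card hsub
    unfold l0 at hφ
    omega
  obtain ⟨i, hiT, hiφ⟩ := Finset.not_subset.mp hsub
  have hφi : φ i = 0 := by simpa using hiφ
  have hti : t < |β i| := by simpa using hiT
  have h1 : g t ≤ g |φ i - β i| := by
    rw [hφi, zero_sub, abs_neg]
    exact (hmono.monotoneOn) ht (le_trans ht hti.le) hti.le
  refine le_trans h1 (Finset.single_le_sum (f := fun j => g |φ j - β j|)
    (fun j _ => hnonneg _ (abs_nonneg _)) (Finset.mem_univ i))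

lemma trunc_bound {n p : ℕ} (y : Fin n → ℝ) (X : Matrix (Fin n) (Fin p) ℝ)
    (η : ℝ) (hη : 0 ≤ η) (β : Fin p → ℝ) (C A B K t : ℝ)
    (hC : ∑ i, (y i - X.mulVec β i) ^ 2 ≤ 2 * C) (hC0 : 0 ≤ C)
    (hA : A = Real.sqrt (2 * C)) (hB : B = ∑ i, ∑ j, |X i j|)
    (hK : K = (1 / 2) * n * (2 * A * B + B ^ 2))
    (ht0 : 0 ≤ t) (ht1 : t ≤ 1) :
    Qobj y X η (fun i => if t < |β i| then β i else 0) ≤ Qobj y X η β + K * t := by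
  set βh : Fin p → ℝ := fun i => if t < |β i| then β i else 0 with hβh
  set e : Fin p → ℝ := β - βh with he
  have hA0 : 0 ≤ A := hA ▸ Real.sqrt_nonneg _
  have hB0 : 0 ≤ B := hB ▸ Finset.sum_nonneg fun i _ =>
    Finset.sum_nonneg fun j _ => abs_nonneg _
  have he_abs : ∀ j, |e j| ≤ t := by
    intro j
    simp only [he, hβh, Pi.sub_apply]
    by_cases h : t < |β j|
    · rw [if_pos h, sub_self, abs_zero]; exact ht0
    · rw [if_neg h, sub_zero]; exact not_lt.mp h
  have hmv : ∀ i, y i - X.mulVec βh i = (y i - X.mulVec β i) + X.mulVec e i := by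
    intro i
    have : X.mulVec e = X.mulVec β - X.mulVec βh := by
      rw [he, Matrix.mulVec_sub]
    rw [this]; simp [Pi.sub_apply]
  set a : Fin n → ℝ := fun i => y i - X.mulVec β i with ha
  set d : Fin n → ℝ := fun i => X.mulVec e i with hd
  have ha_bound : ∀ i, |a i| ≤ A := by
    intro i
    have h1 : a i ^ 2 ≤ 2 * C := by
      refine le_trans ?_ hC
      exact Finset.single_le_sum (f := fun j => (y j - X.mulVec β j) ^ 2)
        (fun j _ => sq_nonneg _) (Finset.mem_univ i)
    rw [hA, ← Real.sqrt_sq_eq_abs]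
    exact Real.sqrt_le_sqrt h1
  have hd_bound : ∀ i, |d i| ≤ B * t := by
    intro i
    have h1 : |d i| ≤ ∑ j, |X i j| * |e j| := by
      simp only [hd, Matrix.mulVec, dotProduct]
      refine le_trans (Finset.abs_sum_le_sum_abs _ _) ?_
      refine Finset.sum_le_sum fun j _ => ?_
      rw [abs_mul]
    refine le_trans h1 ?_
    have h2 : ∑ j, |X i j| * |e j| ≤ ∑ j, |X i j| * t :=
      Finset.sum_le_sum fun j _ => mul_le_mul_of_nonneg_left (he_abs j) (abs_nonneg _)
    refine le_trans h2 ?_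
    rw [← Finset.sum_mul]
    refine mul_le_mul_of_nonneg_right ?_ ht0
    rw [hB]
    exact Finset.single_le_sum (f := fun i' => ∑ j, |X i' j|)
      (fun i' _ => Finset.sum_nonneg fun j _ => abs_nonneg _) (Finset.mem_univ i)
  have hsum : ∑ i, (y i - X.mulVec βh i) ^ 2 ≤
      ∑ i, a i ^ 2 + (n : ℝ) * ((2 * A * B + B ^ 2) * t) := by
    have h1 : ∀ i, (y i - X.mulVec βh i) ^ 2 = a i ^ 2 + (2 * a i * d i + d i ^ 2) := by
      intro i; rw [hmv i]; ring
    have h2 : ∀ i, 2 * a i * d i + d i ^ 2 ≤ (2 * A * B + B ^ 2) * t := by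
      intro i
      have hai := ha_bound i
      have hdi := hd_bound i
      have habs_a := abs_nonneg (a i)
      have habs_d := abs_nonneg (d i)
      have h3 : 2 * a i * d i ≤ 2 * A * (B * t) := by
        have h31 : a i * d i ≤ |a i| * |d i| := le_trans (le_abs_self _) (abs_mul _ _).le
        have h32 : |a i| * |d i| ≤ A * (B * t) := mul_le_mul hai hdi habs_d hA0
        linarith
      have h4 : d i ^ 2 ≤ (B * t) ^ 2 := by
        rw [← sq_abs]; exact pow_le_pow_left₀ habs_d hdi 2
      have h5 : (B * t) ^ 2 ≤ B ^ 2 * t := by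
        have ht2 : t ^ 2 ≤ t := by nlinarith
        calc (B * t) ^ 2 = B ^ 2 * t ^ 2 := by ring
          _ ≤ B ^ 2 * t := mul_le_mul_of_nonneg_left ht2 (sq_nonneg B)
      nlinarith
    calc ∑ i, (y i - X.mulVec βh i) ^ 2
        = ∑ i, (a i ^ 2 + (2 * a i * d i + d i ^ 2)) := by
          exact Finset.sum_congr rfl fun i _ => h1 i
      _ = ∑ i, a i ^ 2 + ∑ i, (2 * a i * d i + d i ^ 2) := Finset.sum_add_distrib
      _ ≤ ∑ i, a i ^ 2 + ∑ _i : Fin n, (2 * A * B + B ^ 2) * t := by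
          gcongr with i; exact h2 i
      _ = ∑ i, a i ^ 2 + (n : ℝ) * ((2 * A * B + B ^ 2) * t) := by
          rw [Finset.sum_const, Finset.card_univ, Fintype.card_fin, nsmul_eq_mul]
  have hl1 : l1 βh ≤ l1 β := by
    refine Finset.sum_le_sum fun i _ => ?_
    simp only [hβh]
    by_cases h : t < |β i| <;> simp [h, abs_nonneg]
  have hKt : (1 / 2) * ((n : ℝ) * ((2 * A * B + B ^ 2) * t)) = K * t := by
    rw [hK]; ring
  unfold Qobj
  have := mul_le_mul_of_nonneg_left hl1 hη
  nlinarith [hsum]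


set_option maxHeartbeats 2000000 in
/-- asymptotic equivalence of the `π_k^g`-penalized problem `(P_λ)`
and the `k`-sparse constrained problem `(Q)`. For every `ε > 0` there is
`λ̲(ε) > 0` such that for all `λ > λ̲`: (1) every optimal `β*` of `(P_λ)` is
within `ε` of some `β̂` with `‖β̂‖₀ ≤ k` that is `ε`-optimal for `(Q)`; and
(2) every optimal solution of `(Q)` is `ε`-optimal for `(P_λ)`. -/
theorem projectedPenalty_asymptotic_equivalence {n p : ℕ} (g : ℝ → ℝ)
    (hg0 : g 0 = 0)
    (hnonneg : ∀ x, 0 ≤ x → 0 ≤ g x)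
    (hmono : StrictMonoOn g (Set.Ici (0 : ℝ)))
    (hcont : ContinuousOn g (Set.Ici (0 : ℝ)))
    (hunbounded : ∀ M : ℝ, ∃ x, 0 ≤ x ∧ M < g x)
    (k : ℕ) (hk : k ≤ p) (η : ℝ) (hη : 0 < η)
    (y : Fin n → ℝ) (X : Matrix (Fin n) (Fin p) ℝ) :
    ∀ ε : ℝ, 0 < ε → ∃ lamLow : ℝ, 0 < lamLow ∧ ∀ lam : ℝ, lamLow < lam →
      (∀ βs : Fin p → ℝ, (∀ β, Pobj y X g k η lam βs ≤ Pobj y X g k η lam β) →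
        ∃ βh : Fin p → ℝ, norm2 (βs - βh) ≤ ε ∧ l0 βh ≤ k ∧
          Qobj y X η βh ≤
            sInf {v : ℝ | ∃ β : Fin p → ℝ, l0 β ≤ k ∧ v = Qobj y X η β} + ε) ∧
      (∀ βs : Fin p → ℝ,
        (l0 βs ≤ k ∧ ∀ β, l0 β ≤ k → Qobj y X η βs ≤ Qobj y X η β) →
        Pobj y X g k η lam βs ≤
          sInf {v : ℝ | ∃ β : Fin p → ℝ, v = Pobj y X g k η lam β} + ε) := by
  intro ε hε
  -- constants
  set C : ℝ := (1 / 2) * ∑ i, (y i) ^ 2 with hCdef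
  have hC0 : 0 ≤ C := by positivity
  set A : ℝ := Real.sqrt (2 * C) with hAdef
  have hA0 : 0 ≤ A := Real.sqrt_nonneg _
  set B : ℝ := ∑ i, ∑ j, |X i j| with hBdef
  have hB0 : 0 ≤ B := Finset.sum_nonneg fun i _ =>
    Finset.sum_nonneg fun j _ => abs_nonneg _
  set K : ℝ := (1 / 2) * n * (2 * A * B + B ^ 2) with hKdef
  have hK0 : 0 ≤ K := by positivity
  set t : ℝ := min 1 (min (ε / (K + 1)) (ε / Real.sqrt (p + 1))) with htdef
  have hsp : (0 : ℝ) < Real.sqrt (p + 1) := Real.sqrt_pos.mpr (by positivity)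
  have ht0 : 0 < t := by
    refine lt_min one_pos (lt_min (by positivity) (by positivity))
  have ht1 : t ≤ 1 := min_le_left _ _
  have htK : K * t ≤ ε := by
    have h1 : t ≤ ε / (K + 1) := le_trans (min_le_right _ _) (min_le_left _ _)
    have h2 : K * t ≤ K * (ε / (K + 1)) := mul_le_mul_of_nonneg_left h1 hK0
    refine le_trans h2 ?_
    rw [mul_div_assoc'] ; rw [div_le_iff₀ (by positivity)]
    nlinarith
  have htp : (p : ℝ) * t ^ 2 ≤ ε ^ 2 := by
    have h1 : t ≤ ε / Real.sqrt (p + 1) := le_trans (min_le_right _ _) (min_le_right _ _)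
    have h2 : t ^ 2 ≤ (ε / Real.sqrt (p + 1)) ^ 2 := by
      exact pow_le_pow_left₀ ht0.le h1 2
    have h3 : (ε / Real.sqrt (p + 1)) ^ 2 = ε ^ 2 / (p + 1) := by
      rw [div_pow, Real.sq_sqrt (by positivity)]
    rw [h3] at h2
    have h4 : (p : ℝ) * t ^ 2 ≤ (p : ℝ) * (ε ^ 2 / (p + 1)) :=
      mul_le_mul_of_nonneg_left h2 (Nat.cast_nonneg p)
    refine le_trans h4 ?_
    rw [mul_div_assoc'] ; rw [div_le_iff₀ (by positivity)]
    nlinarith [sq_nonneg ε, Nat.cast_nonneg (α := ℝ) p]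
  have hgt : 0 < g t := by
    have := hmono (Set.mem_Ici.mpr le_rfl) (Set.mem_Ici.mpr ht0.le) ht0
    rwa [hg0] at this
  refine ⟨C / g t + 1, by positivity, fun lam hlam => ?_⟩
  have hlam0 : 0 < lam := lt_trans (by positivity) hlam
  -- basic objective values at 0
  have hP0 : Pobj y X g k η lam 0 = C := by
    unfold Pobj
    rw [projPen_eq_zero g hg0 hnonneg k 0 (by simp [l0])]
    simp [l1, Matrix.mulVec_zero, hCdef]
  have hQ0 : Qobj y X η 0 = C := by
    unfold Qobj
    simp [l1, Matrix.mulVec_zero, hCdef]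
  have hQnonneg : ∀ β : Fin p → ℝ, 0 ≤ Qobj y X η β := by
    intro β
    unfold Qobj
    have h1 : 0 ≤ ∑ i, (y i - X.mulVec β i) ^ 2 :=
      Finset.sum_nonneg fun i _ => sq_nonneg _
    have h2 : 0 ≤ l1 β := Finset.sum_nonneg fun i _ => abs_nonneg _
    nlinarith
  have hQP : ∀ β : Fin p → ℝ, Qobj y X η β ≤ Pobj y X g k η lam β := by
    intro β
    unfold Pobj Qobj
    have := mul_nonneg hlam0.le (projPen_nonneg g hnonneg k β)
    linarith
  have hPQ_sparse : ∀ β : Fin p → ℝ, l0 β ≤ k →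
      Pobj y X g k η lam β = Qobj y X η β := by
    intro β hβ
    unfold Pobj Qobj
    rw [projPen_eq_zero g hg0 hnonneg k β hβ]
    ring
  have hQne : {v : ℝ | ∃ β : Fin p → ℝ, l0 β ≤ k ∧ v = Qobj y X η β}.Nonempty :=
    ⟨Qobj y X η 0, Set.mem_setOf.mpr ⟨0, by simp [l0], rfl⟩⟩
  constructor
  · -- part 1
    intro βs hopt
    have hPle : Pobj y X g k η lam βs ≤ C := hP0 ▸ hopt 0
    have hquad0 : 0 ≤ ∑ i, (y i - X.mulVec βs i) ^ 2 :=
      Finset.sum_nonneg fun i _ => sq_nonneg _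
    have hl10 : 0 ≤ l1 βs := Finset.sum_nonneg fun i _ => abs_nonneg _
    have hpen0 : 0 ≤ projPen g k βs := projPen_nonneg g hnonneg k βs
    have hPsplit := hPle
    unfold Pobj at hPsplit
    have hquad : ∑ i, (y i - X.mulVec βs i) ^ 2 ≤ 2 * C := by nlinarith
    have hpen : lam * projPen g k βs ≤ C := by nlinarith
    have hcard : (Finset.univ.filter (fun i => t < |βs i|)).card ≤ k := by
      by_contra hcon
      push_neg at hcon
      have h1 : g t ≤ projPen g k βs := le_projPen g hnonneg hmono k βs t ht0.le hcon
      have h2 : lam * g t ≤ lam * projPen g k βs := mul_le_mul_of_nonneg_left h1 hlam0.le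
      have h3 : (C / g t + 1) * g t < lam * g t :=
        mul_lt_mul_of_pos_right hlam hgt
      have h4 : (C / g t + 1) * g t = C + g t := by field_simp
      nlinarith
    set βh : Fin p → ℝ := fun i => if t < |βs i| then βs i else 0 with hβh
    have hl0h : l0 βh ≤ k := by
      refine le_trans (Finset.card_le_card ?_) hcard
      intro i hi
      simp only [Finset.mem_filter, Finset.mem_univ, true_and] at hi ⊢
      by_contra hcon
      simp [hβh, if_neg hcon] at hi
    have hnorm : norm2 (βs - βh) ≤ ε := by
      unfold norm2
      have h1 : ∑ i, (βs - βh) i ^ 2 ≤ (p : ℝ) * t ^ 2 := by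
        calc ∑ i, (βs - βh) i ^ 2 ≤ ∑ _i : Fin p, t ^ 2 := by
              refine Finset.sum_le_sum fun i _ => ?_
              simp only [Pi.sub_apply, hβh]
              by_cases h : t < |βs i|
              · rw [if_pos h, sub_self]
                simpa using sq_nonneg t
              · rw [if_neg h, sub_zero, ← sq_abs]
                exact pow_le_pow_left₀ (abs_nonneg _) (not_lt.mp h) 2
          _ = (p : ℝ) * t ^ 2 := by
              rw [Finset.sum_const, Finset.card_univ, Fintype.card_fin, nsmul_eq_mul]
      calc Real.sqrt (∑ i, (βs - βh) i ^ 2) ≤ Real.sqrt (ε ^ 2) :=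
            Real.sqrt_le_sqrt (le_trans h1 htp)
        _ = ε := Real.sqrt_sq hε.le
    have htrunc : Qobj y X η βh ≤ Qobj y X η βs + K * t :=
      trunc_bound y X η hη.le βs C A B K t hquad hC0 hAdef hBdef hKdef ht0.le ht1
    have hPinf : Pobj y X g k η lam βs ≤
        sInf {v : ℝ | ∃ β : Fin p → ℝ, l0 β ≤ k ∧ v = Qobj y X η β} := by
      refine le_csInf hQne ?_
      rintro v ⟨β, hβ, rfl⟩
      rw [← hPQ_sparse β hβ]
      exact hopt β
    refine ⟨βh, hnorm, hl0h, ?_⟩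
    have := hQP βs
    linarith
  · -- part 2
    rintro βq ⟨hl0q, hoptq⟩
    have hPq : Pobj y X g k η lam βq = Qobj y X η βq := hPQ_sparse βq hl0q
    have hQqC : Qobj y X η βq ≤ C := hQ0 ▸ hoptq 0 (by simp [l0])
    have hlb : ∀ β : Fin p → ℝ, Qobj y X η βq - ε ≤ Pobj y X g k η lam β := by
      intro β
      have hquad0 : 0 ≤ ∑ i, (y i - X.mulVec β i) ^ 2 :=
        Finset.sum_nonneg fun i _ => sq_nonneg _
      have hl10 : 0 ≤ l1 β := Finset.sum_nonneg fun i _ => abs_nonneg _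
      have hpen0 : 0 ≤ projPen g k β := projPen_nonneg g hnonneg k β
      by_cases hq : ∑ i, (y i - X.mulVec β i) ^ 2 ≤ 2 * C
      · by_cases hc : (Finset.univ.filter (fun i => t < |β i|)).card ≤ k
        · set βh : Fin p → ℝ := fun i => if t < |β i| then β i else 0 with hβh
          have hl0h : l0 βh ≤ k := by
            refine le_trans (Finset.card_le_card ?_) hc
            intro i hi
            simp only [Finset.mem_filter, Finset.mem_univ, true_and] at hi ⊢
            by_contra hcon
            simp [hβh, if_neg hcon] at hi
          have htrunc : Qobj y X η βh ≤ Qobj y X η β + K * t :=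
            trunc_bound y X η hη.le β C A B K t hq hC0 hAdef hBdef hKdef ht0.le ht1
          have h1 : Qobj y X η βq ≤ Qobj y X η βh := hoptq βh hl0h
          have h2 := hQP β
          linarith
        · push_neg at hc
          have h1 : g t ≤ projPen g k β := le_projPen g hnonneg hmono k β t ht0.le hc
          have h2 : lam * g t ≤ lam * projPen g k β := mul_le_mul_of_nonneg_left h1 hlam0.le
          have h3 : (C / g t + 1) * g t ≤ lam * g t :=
            mul_le_mul_of_nonneg_right hlam.le hgt.le
          have h4 : (C / g t + 1) * g t = C + g t := by
            field_simp
          unfold Pobj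
          nlinarith
      · push_neg at hq
        unfold Pobj
        have := mul_nonneg hlam0.le hpen0
        nlinarith
    rw [hPq]
    have hPne : {v : ℝ | ∃ β : Fin p → ℝ, v = Pobj y X g k η lam β}.Nonempty :=
      ⟨Pobj y X g k η lam 0, Set.mem_setOf.mpr ⟨0, rfl⟩⟩
    have h1 : Qobj y X η βq - ε ≤
        sInf {v : ℝ | ∃ β : Fin p → ℝ, v = Pobj y X g k η lam β} := by
      refine le_csInf hPne ?_
      rintro v ⟨β, rfl⟩
      exact hlb β
    linarith
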